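/- arXiv:2510.05358 — 7 statements merged into one kernel-verified Lean document; each statement's English description precedes it below -/
import Mathlib

section
/- Gray's curvature conditions imply each other in sequence: if a Riemannian curvature tensor R on an almost Hermitian manifold satisfies (G1): R(X,Y,Z,W) = R(X,Y,JZ,JW) for all vectors, then it satisfies (G2): R(X,Y,Z,W) - R(JX,JY,Z,W) = R(JX,Y,JZ,W) + R(JX,Y,Z,JW); and (G2) implies (G3): R(X,Y,Z,W) = R(JX,JY,JZ,JW). -/
open scoped RealInnerProductSpace

/-!
(G1) together with the pair symmetry makes both sides of (G2) vanish: `R(JX,JY,Z,W) = R(X,Y,Z,W)`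
and `R(JX,Y,Z,JW) = -R(JX,Y,JZ,W)`. For (G2) ⇒ (G3), instantiate (G2) at `(X,Y,Z,W)`,
`(X,Y,JZ,JW)`, `(X,JY,Z,JW)` and `(JX,Y,Z,JW)`; after `J² = -1` the mixed terms cancel and
a signed sum of the four identities reads `2 R(X,Y,Z,W) = 2 R(JX,JY,JZ,JW)`.
-/

section GrayConditions

variable {K M : Type*} [CommRing K] [AddCommGroup M] [Module K M]

def GrayG1 (J : M →ₗ[K] M) (R : M →ₗ[K] M →ₗ[K] M →ₗ[K] M →ₗ[K] K) : Prop :=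
  ∀ x y z w, R x y z w = R x y (J z) (J w)

def GrayG2 (J : M →ₗ[K] M) (R : M →ₗ[K] M →ₗ[K] M →ₗ[K] M →ₗ[K] K) : Prop :=
  ∀ x y z w, R x y z w - R (J x) (J y) z w = R (J x) y (J z) w + R (J x) y z (J w)

def GrayG3 (J : M →ₗ[K] M) (R : M →ₗ[K] M →ₗ[K] M →ₗ[K] M →ₗ[K] K) : Prop :=
  ∀ x y z w, R x y z w = R (J x) (J y) (J z) (J w)

-- `map_neg` does not fire on `R (-a)`: instance search fails to see the `AddCommMonoid` of the
-- iterated hom type as coming from an `AddCommGroup`, so we go through `(-1) • a`.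
theorem LinearMap.map_neg₄ (R : M →ₗ[K] M →ₗ[K] M →ₗ[K] M →ₗ[K] K) (a b c d : M) :
    R (-a) b c d = -R a b c d := by
  rw [← neg_one_smul K a, map_smul]
  simp only [LinearMap.smul_apply, neg_one_smul, LinearMap.neg_apply]

variable {J : M →ₗ[K] M} {R : M →ₗ[K] M →ₗ[K] M →ₗ[K] M →ₗ[K] K}

theorem GrayG1.grayG2 (hJ2 : ∀ x, J (J x) = -x)
    (hpair : ∀ x y z w, R x y z w = R z w x y) (hG1 : GrayG1 J R) : GrayG2 J R := by
  intro x y z w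
  have hJJ : R (J x) (J y) z w = R x y z w := by
    rw [hpair, ← hG1, hpair]
  have hJw : R (J x) y z (J w) = -R (J x) y (J z) w := by
    rw [hG1 (J x) y z (J w), hJ2, map_neg]
  rw [hJJ, hJw]
  ring

theorem GrayG2.grayG3 [IsAddTorsionFree K] (hJ2 : ∀ x, J (J x) = -x) (hG2 : GrayG2 J R) :
    GrayG3 J R := by
  intro x y z w
  have e1 := hG2 x y z w
  have e2 := hG2 x y (J z) (J w)
  have e3 := hG2 x (J y) z (J w)
  have e4 := hG2 (J x) y z (J w)
  simp only [hJ2, map_neg, R.map_neg₄, LinearMap.neg_apply] at e2 e3 e4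
  have h2 : 2 • R x y z w = 2 • R (J x) (J y) (J z) (J w) := by
    linear_combination e1 + e2 + e3 - e4
  exact nsmul_right_injective two_ne_zero h2

end GrayConditions

theorem gray_G1_implies_G2_and_G2_implies_G3_general
    {V : Type*} [NormedAddCommGroup V] [InnerProductSpace ℝ V]
    (J : V →ₗ[ℝ] V)
    (hJ2 : ∀ x, J (J x) = -x)
    (R : V →ₗ[ℝ] V →ₗ[ℝ] V →ₗ[ℝ] V →ₗ[ℝ] ℝ)
    (hpair : ∀ x y z w, R x y z w = R z w x y) :
    ((∀ x y z w, R x y z w = R x y (J z) (J w)) →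
      (∀ x y z w, R x y z w - R (J x) (J y) z w
        = R (J x) y (J z) w + R (J x) y z (J w)))
    ∧ ((∀ x y z w, R x y z w - R (J x) (J y) z w
        = R (J x) y (J z) w + R (J x) y z (J w)) →
      (∀ x y z w, R x y z w = R (J x) (J y) (J z) (J w))) :=
  ⟨GrayG1.grayG2 hJ2 hpair, GrayG2.grayG3 hJ2⟩

/-- Gray's curvature conditions imply each other in sequence:
(G1) implies (G2), and (G2) implies (G3), for an algebraic curvature tensor
on a real inner product space with an orthogonal complex structure. -/
theorem gray_G1_implies_G2_and_G2_implies_G3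
    {V : Type*} [NormedAddCommGroup V] [InnerProductSpace ℝ V]
    (J : V →ₗ[ℝ] V)
    (hJ2 : ∀ x, J (J x) = -x)
    (hJorth : ∀ x y, ⟪J x, J y⟫ = ⟪x, y⟫)
    (R : V →ₗ[ℝ] V →ₗ[ℝ] V →ₗ[ℝ] V →ₗ[ℝ] ℝ)
    (hskew : ∀ x y z w, R x y z w = - R y x z w)
    (hpair : ∀ x y z w, R x y z w = R z w x y)
    (hbianchi : ∀ x y z w, R x y z w + R y z x w + R z x y w = 0) :
    ((∀ x y z w, R x y z w = R x y (J z) (J w)) →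
      (∀ x y z w, R x y z w - R (J x) (J y) z w
        = R (J x) y (J z) w + R (J x) y z (J w)))
    ∧ ((∀ x y z w, R x y z w - R (J x) (J y) z w
        = R (J x) y (J z) w + R (J x) y z (J w)) →
      (∀ x y z w, R x y z w = R (J x) (J y) (J z) (J w))) :=
  gray_G1_implies_G2_and_G2_implies_G3_general J hJ2 R hpair
end

section
/- Let (M⁴,g,J,ω) be a compact almost Hermitian 4-manifold satisfying Gray's first curvature condition in the Hermitian case (J integrable): from the identity s* - s = -|θ|² - 2δθ and the (G1) consequence s* = s, integration over M forces θ = 0; hence a compact Hermitian 4-manifold of class AH₁ with J-invariant Ricci tensor is Kähler. -/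
open MeasureTheory

/-- A compact Hermitian 4-manifold of class AH₁ (so that s* = s) is Kähler: from the
Hermitian identity s* - s = -|θ|² - 2δθ and ∫ δθ = 0, integration forces θ = 0.
Abstract formulation: M is the compact manifold with its volume measure μ, θ p is the
Lee form (dualized) at p, divθ records -δθ... (δθ with sign as in the identity). -/
theorem compact_H1_is_Kahler
    {M E : Type*} [TopologicalSpace M] [CompactSpace M]
    [MeasurableSpace M] [BorelSpace M]
    [NormedAddCommGroup E] [InnerProductSpace ℝ E]
    (μ : Measure M) [IsFiniteMeasure μ] [μ.IsOpenPosMeasure]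
    (s sstar divθ : M → ℝ) (θ : M → E)
    (hθcont : Continuous fun p => ‖θ p‖)
    (hdivcont : Continuous divθ)
    (hrel : ∀ p, sstar p - s p = -‖θ p‖ ^ 2 - 2 * divθ p)
    (hG1 : ∀ p, sstar p = s p)
    (hdiv : ∫ p, divθ p ∂μ = 0) :
    ∀ p, θ p = 0 := by
  have hf : ∀ p, ‖θ p‖ ^ 2 = -2 * divθ p := by
    intro p
    have := hrel p
    rw [hG1 p] at this
    linarith
  have hcont : Continuous fun p => ‖θ p‖ ^ 2 := hθcont.pow 2
  have hint : ∫ p, ‖θ p‖ ^ 2 ∂μ = 0 := by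
    have : (fun p => ‖θ p‖ ^ 2) = fun p => -2 * divθ p := funext hf
    rw [this, integral_const_mul, hdiv, mul_zero]
  have hae : (fun p => ‖θ p‖ ^ 2) =ᵐ[μ] 0 := by
    refine (integral_eq_zero_iff_of_nonneg (fun p => sq_nonneg _) ?_).mp hint
    exact hcont.integrable_of_hasCompactSupport (HasCompactSupport.of_compactSpace _)
  have heq : (fun p => ‖θ p‖ ^ 2) = 0 :=
    (hcont.ae_eq_iff_eq μ continuous_const).mp hae
  intro p
  have := congrFun heq p
  simp only [Pi.zero_apply] at this
  exact norm_eq_zero.mp (pow_eq_zero_iff two_ne_zero |>.mp this)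
end

section
/- If (M⁴,g,J,ω) is an almost Hermitian 4-manifold of class AH₁ (satisfying Gray's first curvature condition), then Ric₀(θ^♯) = -(s/4)θ^♯ and Ric₀(Jθ^♯) = -(s/4)Jθ^♯, where Ric₀ is the trace-free Ricci tensor and s the scalar curvature. -/
open scoped RealInnerProductSpace

local notation "E4" => EuclideanSpace ℝ (Fin 4)

/-- The standard orthonormal basis vectors of Euclidean ℝ⁴. -/
noncomputable def sgl (i : Fin 4) : EuclideanSpace ℝ (Fin 4) := EuclideanSpace.single i 1

/-- On an almost Hermitian 4-manifold of class AH₁, Ric₀(θ^♯) = -(s/4)θ^♯ and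
Ric₀(Jθ^♯) = -(s/4)Jθ^♯.  Pointwise formulation: t = θ^♯, Nv A B is the Nijenhuis
vector (so N_X(A,B) = ⟨Nv A B, X⟩), ω(X,Y) = ⟨JX,Y⟩, and `hB` is the self-dual
Bianchi identity reduced by (G1):
0 = -(s/4)(Jθ)(Z)ω - (J Ric₀(θ))(Z)ω + (s/4)(θ∧Z^♭)'' - (θ∧Ric₀(Z))''
    + (1/2)N_{Ric₀(Z)^♯} - (s/8)N_Z,
where ψ'' = (1/2)(ψ(X,Y) - ψ(JX,JY)). -/
theorem AH1_Ric0_theta_eigenvector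
    (J : E4 →ₗ[ℝ] E4)
    (hJ2 : ∀ x, J (J x) = -x)
    (hJorth : ∀ x y, ⟪J x, J y⟫ = ⟪x, y⟫)
    (s : ℝ) (t : E4)
    (Ric0 : E4 →ₗ[ℝ] E4)
    (hRsym : ∀ X Y, ⟪Ric0 X, Y⟫ = ⟪X, Ric0 Y⟫)
    (hRtr : ∑ i, ⟪Ric0 (sgl i), sgl i⟫ = 0)
    (hRJ : ∀ X, Ric0 (J X) = J (Ric0 X))
    (Nv : E4 → E4 → E4)
    (hNskew : ∀ A B, Nv A B = - Nv B A)
    (hNanti : ∀ A B, Nv (J A) (J B) = - Nv A B)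
    (hNJ : ∀ X A B, ⟪Nv A B, J X⟫ = ⟪Nv (J A) B, X⟫)
    (hB : ∀ Z X Y, 0
      = -(s/4) * ⟪J t, Z⟫ * ⟪J X, Y⟫ - ⟪J (Ric0 t), Z⟫ * ⟪J X, Y⟫
        + (s/4) * ((1/2) * ((⟪t, X⟫ * ⟪Z, Y⟫ - ⟪t, Y⟫ * ⟪Z, X⟫)
            - (⟪t, J X⟫ * ⟪Z, J Y⟫ - ⟪t, J Y⟫ * ⟪Z, J X⟫)))
        - (1/2) * ((⟪t, X⟫ * ⟪Ric0 Z, Y⟫ - ⟪t, Y⟫ * ⟪Ric0 Z, X⟫)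
            - (⟪t, J X⟫ * ⟪Ric0 Z, J Y⟫ - ⟪t, J Y⟫ * ⟪Ric0 Z, J X⟫))
        + (1/2) * ⟪Nv X Y, Ric0 Z⟫ - (s/8) * ⟪Nv X Y, Z⟫) :
    Ric0 t = -(s/4) • t ∧ Ric0 (J t) = -(s/4) • (J t) := by
  -- Nv X (J X) is orthogonal to everything
  have hNdiag : ∀ A : E4, Nv (J A) (J A) = 0 := by
    intro A
    have h := hNskew (J A) (J A)
    have : Nv (J A) (J A) + Nv (J A) (J A) = 0 := by
      nth_rewrite 1 [h]; abel
    have h2 : (2 : ℝ) • Nv (J A) (J A) = 0 := by rw [two_smul]; exact this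
    simpa using h2
  have hNzero : ∀ (X W : E4), ⟪Nv X (J X), W⟫ = 0 := by
    intro X W
    have h1 : ⟪Nv X (J X), J (J W)⟫ = ⟪Nv (J X) (J X), J W⟫ := hNJ (J W) X (J X)
    rw [hJ2, hNdiag] at h1
    simp only [inner_neg_right, inner_zero_left] at h1
    linarith
  have he : ⟪(sgl 0 : E4), sgl 0⟫ = (1:ℝ) := by
    simp [sgl, EuclideanSpace.inner_single_left]
  -- key relation
  have key : ∀ Z : E4, ⟪J (Ric0 t) + (s/4) • J t, Z⟫ = 0 := by
    intro Z
    have h := hB Z (sgl 0) (J (sgl 0))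
    rw [hJorth, he] at h
    simp only [hJ2, inner_neg_right, hNzero, inner_add_left, inner_smul_left,
      real_inner_comm (Nv _ _)] at h
    have hz : ⟪Nv (sgl 0) (J (sgl 0)), Ric0 Z⟫ = 0 := hNzero _ _
    rw [inner_add_left, inner_smul_left]
    simp only [RCLike.star_def, conj_trivial]
    nlinarith [h, hNzero (sgl 0) (Ric0 Z), hNzero (sgl 0) Z]
  have hv : J (Ric0 t) + (s/4) • J t = 0 := by
    have := key (J (Ric0 t) + (s/4) • J t)
    exact inner_self_eq_zero.mp this
  have h1 : Ric0 t = -(s/4) • t := by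
    have := congrArg J hv
    rw [map_add, map_smul, hJ2, hJ2, map_zero] at this
    have : -Ric0 t + (s/4) • (-t) = 0 := by simpa using this
    have h3 : Ric0 t + (s/4) • t = 0 := by
      have := congrArg Neg.neg this
      simpa [neg_add, smul_neg, add_comm] using this
    have h4 := eq_neg_of_add_eq_zero_left h3
    rwa [← neg_smul] at h4
  constructor
  · exact h1
  · rw [hRJ, h1, map_smul]
end

section
/- On an AH₁ almost Hermitian 4-manifold, at any point where s ≠ 0, the span of θ^♯ and Jθ^♯ is orthogonal to the image of the Nijenhuis tensor N, and Ric₀(X) = (s/4)X for every X in the image of N. -/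
open scoped RealInnerProductSpace

local notation "E4" => EuclideanSpace ℝ (Fin 4)

/-- On an AH₁ almost Hermitian 4-manifold, at a point where s ≠ 0, the span of θ^♯ and
Jθ^♯ is orthogonal to the image of the Nijenhuis tensor N, and Ric₀(X) = (s/4)X for
every X in the image of N.  Pointwise formulation as in the Bianchi consequence:
0 = -(s/4)(Jθ)(Z)ω - (J Ric₀(θ))(Z)ω + (s/4)(θ∧Z^♭)'' - (θ∧Ric₀(Z))''
    + (1/2)N_{Ric₀(Z)^♯} - (s/8)N_Z, with N_X(A,B) = ⟨Nv A B, X⟩. -/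
theorem AH1_image_N_orthogonal_and_eigen
    (J : E4 →ₗ[ℝ] E4)
    (hJ2 : ∀ x, J (J x) = -x)
    (hJorth : ∀ x y, ⟪J x, J y⟫ = ⟪x, y⟫)
    (s : ℝ) (hs : s ≠ 0) (t : E4)
    (Ric0 : E4 →ₗ[ℝ] E4)
    (hRsym : ∀ X Y, ⟪Ric0 X, Y⟫ = ⟪X, Ric0 Y⟫)
    (hRtr : ∑ i, ⟪Ric0 (sgl i), sgl i⟫ = 0)
    (hRJ : ∀ X, Ric0 (J X) = J (Ric0 X))
    (Nv : E4 → E4 → E4)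
    (hNskew : ∀ A B, Nv A B = - Nv B A)
    (hNanti : ∀ A B, Nv (J A) (J B) = - Nv A B)
    (hNJ : ∀ X A B, ⟪Nv A B, J X⟫ = ⟪Nv (J A) B, X⟫)
    (hB : ∀ Z X Y, 0
      = -(s/4) * ⟪J t, Z⟫ * ⟪J X, Y⟫ - ⟪J (Ric0 t), Z⟫ * ⟪J X, Y⟫
        + (s/4) * ((1/2) * ((⟪t, X⟫ * ⟪Z, Y⟫ - ⟪t, Y⟫ * ⟪Z, X⟫)
            - (⟪t, J X⟫ * ⟪Z, J Y⟫ - ⟪t, J Y⟫ * ⟪Z, J X⟫)))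
        - (1/2) * ((⟪t, X⟫ * ⟪Ric0 Z, Y⟫ - ⟪t, Y⟫ * ⟪Ric0 Z, X⟫)
            - (⟪t, J X⟫ * ⟪Ric0 Z, J Y⟫ - ⟪t, J Y⟫ * ⟪Ric0 Z, J X⟫))
        + (1/2) * ⟪Nv X Y, Ric0 Z⟫ - (s/8) * ⟪Nv X Y, Z⟫) :
    (∀ A B, ⟪t, Nv A B⟫ = 0 ∧ ⟪J t, Nv A B⟫ = 0)
    ∧ (∀ A B, Ric0 (Nv A B) = (s/4) • Nv A B) := by
  -- J is skew-adjoint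
  have hskew : ∀ x y : E4, ⟪J x, y⟫ = -⟪x, J y⟫ := by
    intro x y
    have h := hJorth x (J y)
    rw [hJ2, inner_neg_right] at h
    linarith
  -- Step 1: Ric0 t = -(s/4) t, in scalar form
  have hsum : ∀ X Y Z : E4, ⟪J X, Y⟫ * (-(s/4) * ⟪J t, Z⟫ - ⟪J (Ric0 t), Z⟫) = 0 := by
    intro X Y Z
    have h1 := hB Z X Y
    have h2 := hB Z (J X) (J Y)
    rw [hNanti] at h2
    simp only [hskew, hJ2, inner_neg_left, inner_neg_right, neg_neg] at h1 h2 ⊢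
    linear_combination -h1/2 - h2/2
  have hRt : ∀ W : E4, ⟪Ric0 t, W⟫ = -(s/4) * ⟪t, W⟫ := by
    intro W
    have he : ⟪(sgl 0 : E4), sgl 0⟫ = (1:ℝ) := by
      simp [sgl, EuclideanSpace.inner_single_left, EuclideanSpace.single_apply]
    have h := hsum (sgl 0) (J (sgl 0)) (-(J W))
    rw [hJorth, he, inner_neg_right, inner_neg_right, hJorth, hJorth] at h
    linarith
  have hJRt : ∀ Z : E4, ⟪J (Ric0 t), Z⟫ = -(s/4) * ⟪J t, Z⟫ := by
    intro Z
    rw [hskew, hskew, hRt]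
    ring
  -- Step 2: the reduced Bianchi identity
  have hstar : ∀ X Y Z : E4, ⟪Nv X Y, Ric0 Z⟫ - (s/4) * ⟪Nv X Y, Z⟫ =
        ⟪t, X⟫ * (⟪Ric0 Z, Y⟫ - (s/4) * ⟪Z, Y⟫)
      - ⟪t, Y⟫ * (⟪Ric0 Z, X⟫ - (s/4) * ⟪Z, X⟫)
      - ⟪t, J X⟫ * (⟪Ric0 Z, J Y⟫ - (s/4) * ⟪Z, J Y⟫)
      + ⟪t, J Y⟫ * (⟪Ric0 Z, J X⟫ - (s/4) * ⟪Z, J X⟫) := by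
    intro X Y Z
    linear_combination (-2 : ℝ) * hB Z X Y + 2 * ⟪J X, Y⟫ * hJRt Z
  -- Step 3: t ⟂ image N
  have ht : ∀ A B : E4, ⟪t, Nv A B⟫ = 0 := by
    intro A B
    have h := hstar A B t
    rw [real_inner_comm (Ric0 t) (Nv A B), real_inner_comm t (Nv A B)] at h
    simp only [hRt] at h
    have hsN : s * ⟪t, Nv A B⟫ = 0 := by linear_combination (-2 : ℝ) * h
    rcases mul_eq_zero.mp hsN with h' | h'
    · exact absurd h' hs
    · exact h'
  have hJt : ∀ A B : E4, ⟪J t, Nv A B⟫ = 0 := by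
    intro A B
    rw [real_inner_comm, hNJ, real_inner_comm]
    exact ht (J A) B
  -- Step 4: eigenvalue equation
  have key : ∀ X Y Z : E4, ⟪Nv (J X) Y, Ric0 Z⟫ = (s/4) * ⟪Nv (J X) Y, Z⟫ := by
    intro X Y Z
    have h1 := hstar (J X) Y Z
    have h2 := hstar X Y (J Z)
    rw [hRJ, hNJ (Ric0 Z) X Y, hNJ Z X Y] at h2
    simp only [hskew, hJ2, inner_neg_left, inner_neg_right, neg_neg] at h1 h2
    linear_combination h1/2 + h2/2
  have hkey : ∀ A B Z : E4, ⟪Nv A B, Ric0 Z⟫ = (s/4) * ⟪Nv A B, Z⟫ := by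
    intro A B Z
    have h := key (-(J A)) B Z
    simp only [map_neg, hJ2, neg_neg] at h
    exact h
  refine ⟨fun A B => ⟨ht A B, hJt A B⟩, fun A B => ?_⟩
  apply ext_inner_right ℝ
  intro v
  rw [real_inner_smul_left, hRsym]
  exact hkey A B v
end

section
/- On an AH₁ almost Hermitian 4-manifold, at any point where s = 0, either Ric = 0, or both θ = 0 and N = 0. -/
open scoped RealInnerProductSpace

local notation "E4" => EuclideanSpace ℝ (Fin 4)

/-- The inner product of 2-forms on Euclidean ℝ⁴: ⟨ψ,χ⟩ = (1/2) Σᵢⱼ ψ(eᵢ,eⱼ)χ(eᵢ,eⱼ). -/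
noncomputable def fInner (ψ χ : EuclideanSpace ℝ (Fin 4) → EuclideanSpace ℝ (Fin 4) → ℝ) : ℝ :=
  (1/2) * ∑ i, ∑ j, ψ (sgl i) (sgl j) * χ (sgl i) (sgl j)

/-!
The 2-form ρ₀(X, Y) = ⟪Ric₀(JX), Y⟫ is skew, and a nonzero vector in the kernel of Ric₀
(θ^♯, or a value of N) makes it degenerate. A degenerate 2-form in dimension four has
vanishing Pfaffian, i.e. ρ₀ ∧ ρ₀ = 0; for an anti-self-dual form ρ₀ ∧ ρ₀ = -|ρ₀|² vol,
so ρ₀ = 0 and therefore Ric₀ = 0.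
-/

open Matrix

namespace Matrix

variable {R : Type*} [CommRing R]

/-- For an alternating `A`, `A.pfaffian4` is the coefficient of `ρ ∧ ρ = 2 pf(A) vol`, where
`ρ = ∑_{i<j} A i j eⁱ ∧ eʲ`. -/
def pfaffian4 (A : Matrix (Fin 4) (Fin 4) R) : R :=
  A 0 1 * A 2 3 - A 0 2 * A 1 3 + A 0 3 * A 1 2

theorem det_eq_pfaffian4_sq {A : Matrix (Fin 4) (Fin 4) R} (hA : ∀ i j, A j i = -A i j)
    (hdiag : ∀ i, A i i = 0) : A.det = A.pfaffian4 ^ 2 := by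
  rw [det_succ_row_zero]
  simp [Fin.sum_univ_succ, det_fin_three, submatrix_apply, Fin.succAbove, pfaffian4, hdiag,
    hA 1 0, hA 2 0, hA 3 0, hA 2 1, hA 3 1, hA 3 2]
  ring

theorem pfaffian4_eq_zero_of_mulVec_eq_zero [IsDomain R] {A : Matrix (Fin 4) (Fin 4) R}
    (hA : ∀ i j, A j i = -A i j) (hdiag : ∀ i, A i i = 0) {v : Fin 4 → R} (hv : v ≠ 0)
    (hAv : A *ᵥ v = 0) : A.pfaffian4 = 0 := by
  have hdet : A.det = 0 := exists_mulVec_eq_zero_iff.mp ⟨v, hv, hAv⟩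
  rw [det_eq_pfaffian4_sq hA hdiag] at hdet
  exact pow_eq_zero_iff two_ne_zero |>.mp hdet

end Matrix

section InnerProductSpace

variable {E : Type*} [NormedAddCommGroup E] [InnerProductSpace ℝ E]

theorem inner_map_left_eq_neg_inner_map_right {J : E → E} (hJ2 : ∀ x, J (J x) = -x)
    (hJorth : ∀ x y, ⟪J x, J y⟫ = ⟪x, y⟫) (x y : E) : ⟪J x, y⟫ = -⟪x, J y⟫ := by
  rw [← hJorth, hJ2, inner_neg_left]

theorem inner_map_comp_antisymm {J Ric : E → E} (hJ2 : ∀ x, J (J x) = -x)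
    (hJorth : ∀ x y, ⟪J x, J y⟫ = ⟪x, y⟫) (hRsym : ∀ x y, ⟪Ric x, y⟫ = ⟪x, Ric y⟫)
    (hRJ : ∀ x, Ric (J x) = J (Ric x)) (x y : E) : ⟪Ric (J y), x⟫ = -⟪Ric (J x), y⟫ := by
  rw [hRsym, inner_map_left_eq_neg_inner_map_right hJ2 hJorth, ← hRJ, real_inner_comm]

end InnerProductSpace

section EuclideanSpace

variable {ι : Type*} [Fintype ι] [DecidableEq ι]

theorem mulVec_of_inner_single (x : ι → EuclideanSpace ℝ ι) (v : EuclideanSpace ℝ ι) :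
    (of fun i j => ⟪x i, EuclideanSpace.single j 1⟫) *ᵥ v.ofLp = fun i => ⟪x i, v⟫ := by
  ext i
  simp [mulVec, dotProduct, PiLp.inner_apply, mul_comm]

theorem LinearMap.eq_zero_of_inner_single {T : EuclideanSpace ℝ ι →ₗ[ℝ] EuclideanSpace ℝ ι}
    (h : ∀ i j, ⟪T (EuclideanSpace.single i 1), EuclideanSpace.single j 1⟫ = 0) : T = 0 := by
  refine (EuclideanSpace.basisFun ι ℝ).toBasis.ext fun i => ?_
  ext j
  simpa [EuclideanSpace.inner_single_right] using h i j

end EuclideanSpace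

theorem fInner_self_eq_zero_iff {ψ : E4 → E4 → ℝ} :
    fInner ψ ψ = 0 ↔ ∀ i j, ψ (sgl i) (sgl j) = 0 := by
  simp only [fInner, one_div, mul_eq_zero, inv_eq_zero, OfNat.ofNat_ne_zero, false_or]
  rw [Finset.sum_eq_zero_iff_of_nonneg fun i _ => Finset.sum_nonneg fun j _ => mul_self_nonneg _]
  simp [Finset.sum_eq_zero_iff_of_nonneg, mul_self_nonneg]

/-- Pointwise model: `t` stands for θ^♯, `Nv` for the Nijenhuis tensor, `ρ` for ρ₀, and
`hasd` encodes anti-self-duality of ρ₀ as ρ₀ ∧ ρ₀ = -|ρ₀|² vol. -/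
theorem AH1_scalar_zero_dichotomy_general
    (J : E4 →ₗ[ℝ] E4)
    (hJ2 : ∀ x, J (J x) = -x)
    (hJorth : ∀ x y, ⟪J x, J y⟫ = ⟪x, y⟫)
    (t : E4)
    (Ric0 : E4 →ₗ[ℝ] E4)
    (hRsym : ∀ X Y, ⟪Ric0 X, Y⟫ = ⟪X, Ric0 Y⟫)
    (hRJ : ∀ X, Ric0 (J X) = J (Ric0 X))
    (Nv : E4 → E4 → E4)
    (hker : Ric0 t = 0)
    (himg : ∀ A B, Ric0 (Nv A B) = 0)
    (ρ : E4 → E4 → ℝ)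
    (hρ : ∀ X Y, ρ X Y = ⟪Ric0 (J X), Y⟫)
    (hasd : ρ (sgl 0) (sgl 1) * ρ (sgl 2) (sgl 3)
        - ρ (sgl 0) (sgl 2) * ρ (sgl 1) (sgl 3)
        + ρ (sgl 0) (sgl 3) * ρ (sgl 1) (sgl 2)
        + ρ (sgl 1) (sgl 2) * ρ (sgl 0) (sgl 3)
        - ρ (sgl 1) (sgl 3) * ρ (sgl 0) (sgl 2)
        + ρ (sgl 2) (sgl 3) * ρ (sgl 0) (sgl 1) = -(fInner ρ ρ)) :
    Ric0 = 0 ∨ (t = 0 ∧ ∀ A B, Nv A B = 0) := by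
  by_cases hc : t = 0 ∧ ∀ A B, Nv A B = 0
  · exact Or.inr hc
  left
  obtain ⟨v, hv0, hRv⟩ : ∃ v, v ≠ 0 ∧ Ric0 v = 0 := by
    by_cases ht : t = 0
    · obtain ⟨A, B, hAB⟩ : ∃ A B, Nv A B ≠ 0 := by simpa [ht] using hc
      exact ⟨Nv A B, hAB, himg A B⟩
    · exact ⟨t, ht, hker⟩
  set M : Matrix (Fin 4) (Fin 4) ℝ := of fun i j => ρ (sgl i) (sgl j) with hM
  have hMskew (i j) : M j i = -M i j := by
    simp only [hM, of_apply, hρ]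
    exact inner_map_comp_antisymm hJ2 hJorth hRsym hRJ _ _
  have hMv : M *ᵥ v.ofLp = 0 := by
    have hMv' : M *ᵥ v.ofLp = fun i => ⟪Ric0 (J (sgl i)), v⟫ := by
      simp only [hM, hρ]
      exact mulVec_of_inner_single _ v
    ext i
    simp [hMv', hRsym, hRv]
  have hpf : M.pfaffian4 = 0 := pfaffian4_eq_zero_of_mulVec_eq_zero hMskew
    (fun i => by linarith [hMskew i i]) (by simpa using hv0) hMv
  have hρ0 : fInner ρ ρ = 0 := by
    simp only [pfaffian4, hM, of_apply] at hpf
    linarith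
  have hRJ0 : Ric0 ∘ₗ J = 0 := LinearMap.eq_zero_of_inner_single fun i j => by
    rw [LinearMap.comp_apply, ← hρ]
    exact fInner_self_eq_zero_iff.mp hρ0 i j
  have hJsurj : Function.Surjective J := fun x => ⟨-J x, by rw [map_neg, hJ2, neg_neg]⟩
  exact (LinearMap.cancel_right hJsurj).mp (by rw [hRJ0, LinearMap.zero_comp])

/-- On an AH₁ almost Hermitian 4-manifold, at a point where s = 0, either Ric = 0
(equivalently Ric₀ = 0, since s = 0), or both θ = 0 and N = 0.  Pointwise formulation,
with the known facts as hypotheses: Ric is J-invariant (so ρ₀(X,Y) = Ric₀(JX,Y) is an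
anti-self-dual 2-form, expressed by ρ∧ρ = -|ρ|² vol); θ^♯,Jθ^♯ ∈ ker Ric₀; the image of
the Nijenhuis tensor consists of eigenvectors of Ric₀ with eigenvalue s/4 = 0. -/
theorem AH1_scalar_zero_dichotomy
    (J : E4 →ₗ[ℝ] E4)
    (hJ2 : ∀ x, J (J x) = -x)
    (hJorth : ∀ x y, ⟪J x, J y⟫ = ⟪x, y⟫)
    (s : ℝ) (hs : s = 0) (t : E4)
    (Ric0 : E4 →ₗ[ℝ] E4)
    (hRsym : ∀ X Y, ⟪Ric0 X, Y⟫ = ⟪X, Ric0 Y⟫)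
    (hRtr : ∑ i, ⟪Ric0 (sgl i), sgl i⟫ = 0)
    (hRJ : ∀ X, Ric0 (J X) = J (Ric0 X))
    (Nv : E4 → E4 → E4)
    (hNskew : ∀ A B, Nv A B = - Nv B A)
    (hNanti : ∀ A B, Nv (J A) (J B) = - Nv A B)
    (hker : Ric0 t = 0) (hkerJ : Ric0 (J t) = 0)
    (himg : ∀ A B, Ric0 (Nv A B) = 0)
    (ρ : E4 → E4 → ℝ)
    (hρ : ∀ X Y, ρ X Y = ⟪Ric0 (J X), Y⟫)
    (hasd : ρ (sgl 0) (sgl 1) * ρ (sgl 2) (sgl 3)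
        - ρ (sgl 0) (sgl 2) * ρ (sgl 1) (sgl 3)
        + ρ (sgl 0) (sgl 3) * ρ (sgl 1) (sgl 2)
        + ρ (sgl 1) (sgl 2) * ρ (sgl 0) (sgl 3)
        - ρ (sgl 1) (sgl 3) * ρ (sgl 0) (sgl 2)
        + ρ (sgl 2) (sgl 3) * ρ (sgl 0) (sgl 1) = -(fInner ρ ρ)) :
    Ric0 = 0 ∨ (t = 0 ∧ ∀ A B, Nv A B = 0) :=
  AH1_scalar_zero_dichotomy_general J hJ2 hJorth t Ric0 hRsym hRJ Nv hker himg ρ hρ hasd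
end

section
/- Let (M⁴,g,J,ω) be an Einstein almost Hermitian 4-manifold of class AH₁. Then either s = 0, in which case g is Ricci-flat and anti-self-dual (W⁺ = 0), or the structure (g,J,ω) is Kähler (θ = 0 and N = 0). -/
open scoped RealInnerProductSpace

/-- Let (M⁴,g,J,ω) be an Einstein almost Hermitian 4-manifold of class AH₁.  Then either
s = 0, in which case g is Ricci-flat and anti-self-dual (W⁺ = 0, i.e. κ = 0 and
W₂⁺ = W₃⁺ = 0), or the structure is Kähler (θ = 0 and N = 0).  Abstract formulation:
M is the (connected) manifold; at each point, s and κ are the scalar and conformal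
scalar curvatures (s is constant since g is Einstein), t p = θ^♯, Nv p the Nijenhuis
vector (N_X(A,B) = ⟨Nv A B, X⟩), w2 p, w3 p the norms of W₂⁺, W₃⁺; the AH₁
characterization gives κ = s and W₂⁺ = W₃⁺ = 0, and `hB` is the self-dual Bianchi
identity with Ric₀ = 0 (Einstein):
0 = -(s/4)(Jθ)(Z)ω + (s/4)(θ∧Z^♭)'' - (s/8)N_Z. -/
theorem Einstein_AH1_dichotomy
    {M E : Type*} [NormedAddCommGroup E] [InnerProductSpace ℝ E]
    (J : E →ₗ[ℝ] E)
    (hJ2 : ∀ x, J (J x) = -x)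
    (hJorth : ∀ x y, ⟪J x, J y⟫ = ⟪x, y⟫)
    (s κ w2 w3 : M → ℝ) (t : M → E) (Nv : M → E → E → E)
    (hconst : ∀ p q, s p = s q)
    (hκ : ∀ p, κ p = s p)
    (hW2 : ∀ p, w2 p = 0) (hW3 : ∀ p, w3 p = 0)
    (hNskew : ∀ p A B, Nv p A B = - Nv p B A)
    (hNanti : ∀ p A B, Nv p (J A) (J B) = - Nv p A B)
    (hB : ∀ p Z X Y, 0
      = -(s p/4) * ⟪J (t p), Z⟫ * ⟪J X, Y⟫
        + (s p/4) * ((1/2) * ((⟪t p, X⟫ * ⟪Z, Y⟫ - ⟪t p, Y⟫ * ⟪Z, X⟫)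
            - (⟪t p, J X⟫ * ⟪Z, J Y⟫ - ⟪t p, J Y⟫ * ⟪Z, J X⟫)))
        - (s p/8) * ⟪Nv p X Y, Z⟫) :
    (∀ p, s p = 0 ∧ κ p = 0 ∧ w2 p = 0 ∧ w3 p = 0)
    ∨ (∀ p, t p = 0 ∧ ∀ A B, Nv p A B = 0) := by

  by_cases hs : ∀ p, s p = 0
  · left
    exact fun p => ⟨hs p, (hκ p).trans (hs p), hW2 p, hW3 p⟩
  · right
    push_neg at hs
    obtain ⟨p₀, hp₀⟩ := hs
    intro p
    have hc : s p ≠ 0 := fun h => hp₀ ((hconst p₀ p).trans h)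
    have hswap : ∀ x y : E, ⟪J x, y⟫ = -⟪x, J y⟫ := by
      intro x y
      have := hJorth x (J y)
      rw [hJ2 y, inner_neg_right] at this
      linarith
    have key : ∀ Z X Y : E, ⟪J (t p), Z⟫ * ⟪X, J Y⟫ = 0 := by
      intro Z X Y
      have h1 := hB p Z X Y
      have h2 := hB p Z (J X) (J Y)
      rw [hNanti p X Y, hJ2 X, hJ2 Y] at h2
      simp only [inner_neg_left, inner_neg_right] at h2
      rw [hswap X Y] at h1
      have h3 : s p * (⟪J (t p), Z⟫ * ⟪X, J Y⟫) = 0 := by linear_combination (-2:ℝ) * h1 - 2 * h2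
      exact (mul_eq_zero.mp h3).resolve_left hc
    have ht : t p = 0 := by
      have h := key (J (t p)) (J (t p)) (t p)
      rw [hJorth] at h
      exact inner_self_eq_zero.mp (mul_self_eq_zero.mp h)
    refine ⟨ht, fun A B => ?_⟩
    have h := hB p (Nv p A B) A B
    rw [ht] at h
    simp only [map_zero, inner_zero_left] at h
    have h4 : s p * ⟪Nv p A B, Nv p A B⟫ = 0 := by linear_combination (8:ℝ) * h
    exact inner_self_eq_zero.mp ((mul_eq_zero.mp h4).resolve_left hc)
end

section
/- On a 4-dimensional unimodular Lie algebra with a left-invariant almost Hermitian structure, the Lee form is co-closed: δθ = 0. Consequently, combining with the identity (2/3)(κ - s) = (1/4)|N|² - |θ|² - 2δθ, any unimodular Lie algebra AH₁-structure (which has κ = s) satisfies |θ|² = (1/4)|N|². -/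
open scoped RealInnerProductSpace

/-- On a 4-dimensional unimodular Lie algebra with a left-invariant almost Hermitian
structure, the Lee form is co-closed: δθ = 0.  Consequently, combining with the
Weitzenböck identity (2/3)(κ - s) = (1/4)|N|² - |θ|² - 2δθ, any unimodular Lie algebra
AH₁-structure (which has κ = s) satisfies |θ|² = (1/4)|N|².
Here `Lb` is the Lie bracket, unimodularity is tr(ad_Z) = 0, `nabla` is the Levi-Civita
connection determined by Koszul's formula, t = θ^♯, and δθ = -Σᵢ θ(∇_{eᵢ}eᵢ). -/
theorem unimodular_LieAlgebra_delta_theta_zero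
    {E : Type*} [NormedAddCommGroup E] [InnerProductSpace ℝ E]
    (b : OrthonormalBasis (Fin 4) ℝ E)
    (Lb : E →ₗ[ℝ] E →ₗ[ℝ] E)
    (hLskew : ∀ x y, Lb x y = - Lb y x)
    (hunimod : ∀ z, ∑ i, ⟪Lb z (b i), b i⟫ = 0)
    (nabla : E → E → E)
    (hKoszul : ∀ x y z, 2 * ⟪nabla x y, z⟫
      = ⟪Lb x y, z⟫ - ⟪Lb y z, x⟫ + ⟪Lb z x, y⟫)
    (t : E) (κ s Nsq : ℝ)
    (hWeitzenbock : (2/3) * (κ - s)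
      = (1/4) * Nsq - ⟪t, t⟫ - 2 * (-(∑ i, ⟪t, nabla (b i) (b i)⟫)))
    (hAH1 : κ = s) :
    (-(∑ i, ⟪t, nabla (b i) (b i)⟫) = 0) ∧ ⟪t, t⟫ = (1/4) * Nsq := by
  have h1 : ∀ i, ⟪t, nabla (b i) (b i)⟫ = ⟪Lb t (b i), b i⟫ := by
    intro i
    have hk := hKoszul (b i) (b i) t
    have hself : ⟪Lb (b i) (b i), t⟫ = 0 := by
      have h := hLskew (b i) (b i)
      have : ⟪Lb (b i) (b i), t⟫ = -⟪Lb (b i) (b i), t⟫ := by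
        nth_rewrite 1 [h]; rw [inner_neg_left]
      linarith
    have hsw : ⟪Lb (b i) t, b i⟫ = -⟪Lb t (b i), b i⟫ := by
      rw [hLskew (b i) t, inner_neg_left]
    have hc : ⟪t, nabla (b i) (b i)⟫ = ⟪nabla (b i) (b i), t⟫ := real_inner_comm _ _
    rw [hself, hsw] at hk
    linarith
  have hsum : (∑ i, ⟪t, nabla (b i) (b i)⟫) = 0 := by
    calc (∑ i, ⟪t, nabla (b i) (b i)⟫) = ∑ i, ⟪Lb t (b i), b i⟫ := by
          exact Finset.sum_congr rfl fun i _ => h1 i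
      _ = 0 := hunimod t
  refine ⟨by rw [hsum]; ring, ?_⟩
  rw [hsum] at hWeitzenbock
  rw [hAH1] at hWeitzenbock
  linarith
end
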